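/- arXiv:2306.07920 — 3 statements merged into one kernel-verified Lean document; each statement's English description precedes it below -/
import Mathlib

section
/- For all a, b, c, d ∈ ℕ and every positive integer n, the identity f_{a,b,c,d}(t,q) − f_{a+n,b,c,d}(t,q) = Σ_{k=0}^{n−1} f_{a+8+k, b+3, a+c+4+k, d+4}(t,q) holds in ℂ[[t,q]]. -/
/-- The q-Pochhammer symbol `(q)_k = ∏_{j=1}^k (1 - q^j)` in `ℂ[[q]]`. -/
noncomputable def qPoch (k : ℕ) : PowerSeries ℂ :=
  ∏ j ∈ Finset.range k, (1 - (PowerSeries.X : PowerSeries ℂ) ^ (j + 1))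

/-- The series `f_{a,b,c,d}(t,q) ∈ ℂ[[t,q]]`, viewed as an element of `ℂ[[q]][[t]]`
(the outer variable is `t`, the inner variable is `q`).  The coefficient of `t^m`
is the (finite) sum over the pairs `(k₁, k₂)` with `4k₁ + 2k₂ + d = m` of
`q^{4k₁² + 3k₁k₂ + k₂² + ak₁ + bk₂ + c} / ((q)_{k₁} (q)_{k₂})`. -/
noncomputable def fS (a b c d : ℕ) : PowerSeries (PowerSeries ℂ) :=
  PowerSeries.mk fun m =>
    ∑ k ∈ (Finset.range (m + 1) ×ˢ Finset.range (m + 1)).filter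
        (fun k : ℕ × ℕ => 4 * k.1 + 2 * k.2 + d = m),
      (PowerSeries.X : PowerSeries ℂ) ^
          (4 * k.1 ^ 2 + 3 * k.1 * k.2 + k.2 ^ 2 + a * k.1 + b * k.2 + c) *
        (qPoch k.1 * qPoch k.2)⁻¹

/-!
Subtracting `f_{a+1}` from `f_a` multiplies the `(k₁, k₂)` summand by `1 - q^{k₁}`. This kills the
summands with `k₁ = 0` and, for `k₁ = j + 1`, cancels the last factor of `(q)_{j+1}`; after the
shift `k₁ = j + 1` the quadratic exponent becomes that of `f_{a+8, b+3, a+c+4, d+4}` at `(j, k₂)`.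
So `f_a - f_{a+1} = f_{a+8, b+3, a+c+4, d+4}`, and the theorem is the telescoping sum of these.
-/

open PowerSeries Finset

lemma qPoch_succ (k : ℕ) : qPoch (k + 1) = qPoch k * (1 - X ^ (k + 1)) :=
  prod_range_succ _ _

lemma one_sub_X_pow_mul_inv_qPoch_succ_mul (k : ℕ) (g : ℂ⟦X⟧) :
    (1 - X ^ (k + 1)) * (qPoch (k + 1) * g)⁻¹ = (qPoch k * g)⁻¹ := by
  have hunit : (1 - X ^ (k + 1) : ℂ⟦X⟧) * (1 - X ^ (k + 1))⁻¹ = 1 :=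
    PowerSeries.mul_inv_cancel _ (by simp)
  rw [qPoch_succ, mul_right_comm, PowerSeries.mul_inv_rev, ← mul_assoc, hunit, one_mul]

noncomputable def fSummand (a b c : ℕ) (k : ℕ × ℕ) : ℂ⟦X⟧ :=
  X ^ (4 * k.1 ^ 2 + 3 * k.1 * k.2 + k.2 ^ 2 + a * k.1 + b * k.2 + c) *
    (qPoch k.1 * qPoch k.2)⁻¹

lemma coeff_fS (a b c d m : ℕ) :
    coeff m (fS a b c d) =
      ∑ k ∈ (range (m + 1) ×ˢ range (m + 1)).filter (fun k => 4 * k.1 + 2 * k.2 + d = m),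
        fSummand a b c k := by
  simp only [fS, fSummand, coeff_mk]

lemma fSummand_sub_fSummand_succ_left (a b c : ℕ) (k : ℕ × ℕ) :
    fSummand a b c k - fSummand (a + 1) b c k =
      X ^ (4 * k.1 ^ 2 + 3 * k.1 * k.2 + k.2 ^ 2 + a * k.1 + b * k.2 + c) *
        ((1 - X ^ k.1) * (qPoch k.1 * qPoch k.2)⁻¹) := by
  simp only [fSummand]
  ring

lemma fSummand_zero_sub_fSummand_succ_left (a b c k₂ : ℕ) :
    fSummand a b c (0, k₂) - fSummand (a + 1) b c (0, k₂) = 0 := by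
  simp [fSummand_sub_fSummand_succ_left]

lemma fSummand_succ_sub_fSummand_succ_left (a b c j k₂ : ℕ) :
    fSummand a b c (j + 1, k₂) - fSummand (a + 1) b c (j + 1, k₂) =
      fSummand (a + 8) (b + 3) (a + c + 4) (j, k₂) := by
  have hexp : 4 * (j + 1) ^ 2 + 3 * (j + 1) * k₂ + k₂ ^ 2 + a * (j + 1) + b * k₂ + c =
      4 * j ^ 2 + 3 * j * k₂ + k₂ ^ 2 + (a + 8) * j + (b + 3) * k₂ + (a + c + 4) := by
    ring
  rw [fSummand_sub_fSummand_succ_left, one_sub_X_pow_mul_inv_qPoch_succ_mul]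
  simp only [fSummand, hexp]

lemma fS_sub_fS_succ_left (a b c d : ℕ) :
    fS a b c d - fS (a + 1) b c d = fS (a + 8) (b + 3) (a + c + 4) (d + 4) := by
  ext m : 1
  rw [map_sub, coeff_fS, coeff_fS, coeff_fS, ← sum_sub_distrib]
  symm
  refine sum_of_injOn (fun k => (k.1 + 1, k.2)) ?_ ?_ ?_ ?_
  · intro k _ l _ hkl
    simpa [Prod.ext_iff] using hkl
  · intro k hk
    simp only [coe_filter, mem_product, mem_range, Set.mem_ofPred_eq] at hk ⊢
    omega
  · rintro ⟨k₁, k₂⟩ hk hnot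
    obtain rfl : k₁ = 0 := by
      by_contra hk₁
      refine hnot ⟨(k₁ - 1, k₂), ?_, ?_⟩
      · simp only [coe_filter, mem_filter, mem_product, mem_range, Set.mem_ofPred_eq] at hk ⊢
        omega
      · simp only [Prod.mk.injEq, and_true]
        omega
    exact fSummand_zero_sub_fSummand_succ_left a b c k₂
  · rintro ⟨j, k₂⟩ _
    exact (fSummand_succ_sub_fSummand_succ_left a b c j k₂).symm

theorem f_sub_left_general (a b c d n : ℕ) :
    fS a b c d - fS (a + n) b c d =
      ∑ k ∈ Finset.range n, fS (a + 8 + k) (b + 3) (a + c + 4 + k) (d + 4) := by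
  have hstep (k : ℕ) : fS (a + 8 + k) (b + 3) (a + c + 4 + k) (d + 4) =
      fS (a + k) b c d - fS (a + (k + 1)) b c d := by
    rw [← add_assoc, fS_sub_fS_succ_left]
    congr 1 <;> ring
  simp only [hstep]
  exact (sum_range_sub' (fun k => fS (a + k) b c d) n).symm

/-- `f_{a,b,c,d}(t,q) − f_{a+n,b,c,d}(t,q) = Σ_{k=0}^{n−1} f_{a+8+k, b+3, a+c+4+k, d+4}(t,q)`. -/
theorem f_sub_left (a b c d n : ℕ) (hn : 0 < n) :
    fS a b c d - fS (a + n) b c d =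
      ∑ k ∈ Finset.range n, fS (a + 8 + k) (b + 3) (a + c + 4 + k) (d + 4) :=
  f_sub_left_general a b c d n
end

section
/- For all a, b, c, d ∈ ℕ and every positive integer n, the identity f_{a,b,c,d}(t,q) − f_{a,b+n,c,d}(t,q) = Σ_{k=0}^{n−1} f_{a+3, b+2+k, b+c+1+k, d+2}(t,q) holds in ℂ[[t,q]]. -/
lemma qPoch_constCoeff (k : ℕ) : PowerSeries.constantCoeff (qPoch k) = 1 := by
  unfold qPoch
  rw [map_prod]
  apply Finset.prod_eq_one
  intro j _
  simp

lemma key_inv (k1 k : ℕ) :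
    (1 - (PowerSeries.X : PowerSeries ℂ) ^ (k + 1)) * (qPoch k1 * qPoch (k + 1))⁻¹ =
      (qPoch k1 * qPoch k)⁻¹ := by
  have hu : PowerSeries.constantCoeff (qPoch k1 * qPoch k) ≠ 0 := by
    simp [map_mul, qPoch_constCoeff]
  have hv : PowerSeries.constantCoeff (qPoch k1 * qPoch (k + 1)) ≠ 0 := by
    simp [map_mul, qPoch_constCoeff]
  have hne : (qPoch k1 * qPoch k : PowerSeries ℂ) ≠ 0 := by
    intro h; rw [h] at hu; simp at hu
  apply mul_left_cancel₀ hne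
  rw [PowerSeries.mul_inv_cancel _ hu, ← mul_assoc]
  have hp : qPoch k1 * qPoch k * (1 - (PowerSeries.X : PowerSeries ℂ) ^ (k + 1)) =
      qPoch k1 * qPoch (k + 1) := by
    unfold qPoch
    rw [Finset.prod_range_succ, mul_assoc]
  rw [hp, PowerSeries.mul_inv_cancel _ hv]

lemma term_step (k1 k e : ℕ) :
    (PowerSeries.X : PowerSeries ℂ) ^ e * (qPoch k1 * qPoch (k + 1))⁻¹ -
      (PowerSeries.X : PowerSeries ℂ) ^ (e + (k + 1)) * (qPoch k1 * qPoch (k + 1))⁻¹ =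
    (PowerSeries.X : PowerSeries ℂ) ^ e * (qPoch k1 * qPoch k)⁻¹ := by
  rw [pow_add, mul_assoc, ← mul_sub, ← one_sub_mul, key_inv]

lemma f_step (a b c d : ℕ) :
    fS a b c d - fS a (b + 1) c d = fS (a + 3) (b + 2) (b + c + 1) (d + 2) := by
  unfold fS
  ext m : 1
  simp only [map_sub, PowerSeries.coeff_mk]
  rw [← Finset.sum_sub_distrib]
  have hfilter : ∀ p ∈ (Finset.range (m + 1) ×ˢ Finset.range (m + 1)).filter
      (fun k : ℕ × ℕ => 4 * k.1 + 2 * k.2 + d = m),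
      ((PowerSeries.X : PowerSeries ℂ) ^
          (4 * p.1 ^ 2 + 3 * p.1 * p.2 + p.2 ^ 2 + a * p.1 + b * p.2 + c) *
        (qPoch p.1 * qPoch p.2)⁻¹ -
       (PowerSeries.X : PowerSeries ℂ) ^
          (4 * p.1 ^ 2 + 3 * p.1 * p.2 + p.2 ^ 2 + a * p.1 + (b + 1) * p.2 + c) *
        (qPoch p.1 * qPoch p.2)⁻¹) ≠ 0 → (fun k : ℕ × ℕ => 0 < k.2) p := by
    intro p _ h
    by_contra h0
    push_neg at h0
    have h2 : p.2 = 0 := by omega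
    apply h
    simp [h2]
  rw [← Finset.sum_filter_of_ne hfilter]
  refine Finset.sum_nbij' (fun p : ℕ × ℕ => (p.1, p.2 - 1)) (fun p : ℕ × ℕ => (p.1, p.2 + 1))
    ?_ ?_ ?_ ?_ ?_
  · intro p hp
    simp only [Finset.mem_filter, Finset.mem_product, Finset.mem_range] at hp ⊢
    omega
  · intro p hp
    simp only [Finset.mem_filter, Finset.mem_product, Finset.mem_range] at hp ⊢
    omega
  · intro p hp
    simp only [Finset.mem_filter, Finset.mem_product, Finset.mem_range] at hp
    have : 0 < p.2 := hp.2
    ext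
    · rfl
    · simp; omega
  · intro p hp
    rfl
  · intro p hp
    obtain ⟨p1, p2⟩ := p
    simp only [Finset.mem_filter, Finset.mem_product, Finset.mem_range] at hp
    obtain ⟨-, hpos⟩ := hp
    change 0 < p2 at hpos
    obtain ⟨k, hk⟩ : ∃ k, p2 = k + 1 := ⟨p2 - 1, by omega⟩
    subst hk
    simp only [Nat.add_sub_cancel]
    have he : 4 * p1 ^ 2 + 3 * p1 * (k + 1) + (k + 1) ^ 2 + a * p1 + (b + 1) * (k + 1) + c
        = (4 * p1 ^ 2 + 3 * p1 * (k + 1) + (k + 1) ^ 2 + a * p1 + b * (k + 1) + c)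
          + (k + 1) := by ring
    have he2 : 4 * p1 ^ 2 + 3 * p1 * (k + 1) + (k + 1) ^ 2 + a * p1 + b * (k + 1) + c
        = 4 * p1 ^ 2 + 3 * p1 * k + k ^ 2 + (a + 3) * p1 + (b + 2) * k + (b + c + 1) := by
      ring
    rw [he, term_step, he2]

/-- `f_{a,b,c,d}(t,q) − f_{a,b+n,c,d}(t,q) = Σ_{k=0}^{n−1} f_{a+3, b+2+k, b+c+1+k, d+2}(t,q)`. -/
theorem f_sub_right (a b c d n : ℕ) (hn : 0 < n) :
    fS a b c d - fS a (b + n) c d =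
      ∑ k ∈ Finset.range n, fS (a + 3) (b + 2 + k) (b + c + 1 + k) (d + 2) := by
  induction n with
  | zero => simp
  | succ n ih =>
    rcases Nat.eq_zero_or_pos n with h0 | hpos
    · subst h0
      simpa using f_step a b c d
    · rw [Finset.sum_range_succ, ← ih hpos]
      have := f_step a (b + n) c d
      have heq : fS (a + 3) (b + n + 2) (b + n + c + 1) (d + 2)
          = fS (a + 3) (b + 2 + n) (b + c + 1 + n) (d + 2) := by
        congr 1 <;> ring
      rw [heq] at this
      have hb : b + n + 1 = b + (n + 1) := by ring
      rw [hb] at this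
      rw [← this, sub_add_sub_cancel]
end

section
/- For all m, n ∈ ℕ with m ≤ n, the number of partitions λ ∈ P_{>4} with Δ(λ) = n and len(λ) = 2m equals the sum of the numbers of partitions λ with Δ(λ) = n − m and len(λ) = 2m lying in P_{4,4}, in P_{5,4}, in P_{>5,4}, and in P_{>4}, respectively; explicitly, |P_{>4}(n,2m)| = |P_{4,4}(n−m,2m)| + |P_{5,4}(n−m,2m)| + |P_{>5,4}(n−m,2m)| + |P_{>4}(n−m,2m)|. -/
/-- A partition: a weakly decreasing finite list of positive integers
(the empty partition is allowed). -/
def IsPartition (l : List ℕ) : Prop :=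
  l.Pairwise (· ≥ ·) ∧ ∀ x ∈ l, 0 < x

/-- The weight `Δ(λ)` of a partition is `λ.sum`.  The length `len(λ)` is
`2·(number of parts ≥ 2) + (number of parts equal to 1)`. -/
def plen (l : List ℕ) : ℕ :=
  2 * (l.filter fun x => 2 ≤ x).length + (l.filter fun x => x = 1).length

/-- The ordinary members of `R` with parameter `r`. -/
def ROrd (r : ℕ) : List (List ℕ) :=
  [[r, r, r], [r + 1, r, r], [r + 1, r + 1, r], [r + 2, r + 1, r],
   [r + 2, r + 2, r], [r + 2, r, r], [r + 3, r + 3, r, r], [r + 4, r + 3, r, r],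
   [r + 4, r + 3, r + 1, r], [r + 4, r + 4, r + 1, r],
   [r + 6, r + 5, r + 3, r + 1, r]]

/-- The refined generating function `p_S(t,q) = Σ_{λ ∈ S} t^{len λ} q^{Δ λ}`
of a set of partitions, as an element of `ℂ[[q]][[t]]`:  the coefficient of
`t^m q^n` is the number of `λ ∈ S` with `len λ = m` and `Δ λ = n`. -/
noncomputable def genFun (S : Set (List ℕ)) : PowerSeries (PowerSeries ℂ) :=
  PowerSeries.mk fun m => PowerSeries.mk fun n =>
    (Set.ncard {l | l ∈ S ∧ plen l = m ∧ l.sum = n} : ℂ)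

/-- The set `R^{1/2}` of forbidden partitions. -/
def RHalf : Set (List ℕ) :=
  {l | (∃ r, 3 ≤ r ∧ l ∈ ROrd r) ∨
    l ∈ [[2], [1, 1, 1], [3, 1, 1], [3, 3], [4, 3, 1], [4, 4, 1],
      [5, 4, 1, 1], [6, 5, 3, 1]]}

/-- `P^{1/2}`: partitions containing (as a contiguous sublist) no member of `R^{1/2}`. -/
def PHalf : Set (List ℕ) :=
  {l | IsPartition l ∧ ∀ η ∈ RHalf, ¬ η <:+: l}

/-- `P_{>4}`: partitions in `P^{1/2}` with all parts `> 4`. -/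
def PgtFour : Set (List ℕ) := {l | l ∈ PHalf ∧ ∀ x ∈ l, 4 < x}

/-- `P_{4,4}`: partitions in `P^{1/2}` of the form `μ ++ [4,4]`. -/
def PFourFour : Set (List ℕ) :=
  {l | l ∈ PHalf ∧ ∃ μ : List ℕ, IsPartition μ ∧ l = μ ++ [4, 4]}

/-- `P_{5,4}`: partitions in `P^{1/2}` of the form `μ ++ [5,4]`. -/
def PFiveFour : Set (List ℕ) :=
  {l | l ∈ PHalf ∧ ∃ μ : List ℕ, IsPartition μ ∧ l = μ ++ [5, 4]}

/-- `P_{>5,4}`: partitions in `P^{1/2}` of the form `μ ++ [4]` with all parts of `μ` `> 5`. -/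
def PgtFiveFour : Set (List ℕ) :=
  {l | l ∈ PHalf ∧ ∃ μ : List ℕ, IsPartition μ ∧ (∀ x ∈ μ, 5 < x) ∧ l = μ ++ [4]}

/-- For a set `X` of partitions, `X(n, m)` is the subset of weight `n` and length `m`. -/
def partsOf (X : Set (List ℕ)) (n m : ℕ) : Set (List ℕ) :=
  {l | l ∈ X ∧ l.sum = n ∧ plen l = m}

section Aux

private lemma map_sub_add {l : List ℕ} (h : ∀ x ∈ l, 0 < x) :
    (l.map (· - 1)).map (· + 1) = l := by
  rw [List.map_map]
  conv_rhs => rw [← List.map_id l]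
  refine List.map_congr_left fun x hx => ?_
  have := h x hx; simp; omega

private lemma sum_map_add1 (l : List ℕ) : (l.map (· + 1)).sum = l.sum + l.length := by
  induction l with
  | nil => simp
  | cons a t ih => simp [ih]; omega

private lemma sorted_map_add1 {l : List ℕ} :
    (l.map (· + 1)).Pairwise (· ≥ ·) ↔ l.Pairwise (· ≥ ·) := by
  rw [List.pairwise_map]
  constructor <;> exact fun h => h.imp (by omega)

private lemma plen_eq_two_mul {l : List ℕ} (h : ∀ x ∈ l, 2 ≤ x) :
    plen l = 2 * l.length := by
  have h1 : l.filter (fun x => 2 ≤ x) = l := by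
    apply List.filter_eq_self.2
    intro a ha; simpa using h a ha
  have h2 : l.filter (fun x => x = 1) = [] := by
    apply List.filter_eq_nil_iff.2
    intro a ha; have := h a ha; simp; omega
  simp [plen, h1, h2]

private lemma mem_ROrd_self {r : ℕ} {η : List ℕ} (h : η ∈ ROrd r) : r ∈ η := by
  simp only [ROrd, List.mem_cons, List.not_mem_nil, or_false] at h
  rcases h with rfl|rfl|rfl|rfl|rfl|rfl|rfl|rfl|rfl|rfl|rfl <;> simp

private lemma mem_ROrd_succ {r : ℕ} {η : List ℕ} (h : η ∈ ROrd r) :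
    η.map (· + 1) ∈ ROrd (r + 1) := by
  simp only [ROrd, List.mem_cons, List.not_mem_nil, or_false] at h ⊢
  rcases h with rfl|rfl|rfl|rfl|rfl|rfl|rfl|rfl|rfl|rfl|rfl  <;>
    simp [List.cons.injEq]

private lemma mem_ROrd_pred {r : ℕ} {η : List ℕ} (h : η ∈ ROrd (r + 1)) :
    η.map (· - 1) ∈ ROrd r := by
  simp only [ROrd, List.mem_cons, List.not_mem_nil, or_false] at h ⊢
  rcases h with rfl|rfl|rfl|rfl|rfl|rfl|rfl|rfl|rfl|rfl|rfl  <;>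
    simp [List.cons.injEq]

private lemma mem_ROrd_pos {r : ℕ} {η : List ℕ} (h : η ∈ ROrd r) :
    ∀ x ∈ η, r ≤ x := by
  simp only [ROrd, List.mem_cons, List.not_mem_nil, or_false] at h
  rcases h with rfl|rfl|rfl|rfl|rfl|rfl|rfl|rfl|rfl|rfl|rfl <;>
    (intro x hx; simp at hx; omega)

private lemma infix_map {η l : List ℕ} (f : ℕ → ℕ) (h : η <:+: l) :
    η.map f <:+: l.map f := by
  obtain ⟨s, t, rfl⟩ := h
  exact ⟨s.map f, t.map f, by simp⟩

end Aux
section Aux2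

private lemma RHalf_exc_small {η : List ℕ}
    (h : η ∈ [[2], [1, 1, 1], [3, 1, 1], [3, 3], [4, 3, 1], [4, 4, 1],
      [5, 4, 1, 1], [6, 5, 3, 1]]) : ∃ x ∈ η, x ≤ 3 := by
  simp only [List.mem_cons, List.not_mem_nil, or_false] at h
  rcases h with rfl|rfl|rfl|rfl|rfl|rfl|rfl|rfl
  · exact ⟨2, by simp⟩
  · exact ⟨1, by simp⟩
  · exact ⟨1, by simp⟩
  · exact ⟨3, by simp⟩
  · exact ⟨1, by simp⟩
  · exact ⟨1, by simp⟩
  · exact ⟨1, by simp⟩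
  · exact ⟨1, by simp⟩

/-- Characterization of `PHalf` for lists with all entries `≥ c`, for `c = 4` or `5`. -/
private lemma mem_PHalf_iff {c : ℕ} (hc : 4 ≤ c) {l : List ℕ}
    (hp : IsPartition l) (h4 : ∀ x ∈ l, c ≤ x) :
    l ∈ PHalf ↔ ∀ r, c ≤ r → ∀ η ∈ ROrd r, ¬ η <:+: l := by
  constructor
  · intro hl r hr η hη
    exact hl.2 η (Or.inl ⟨r, by omega, hη⟩)
  · intro H
    refine ⟨hp, fun η hη hinf => ?_⟩
    rcases hη with ⟨r, hr, hmem⟩ | hexc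
    · have hrl : r ∈ l := hinf.sublist.subset (mem_ROrd_self hmem)
      have := h4 r hrl
      exact H r (by omega) η hmem hinf
    · obtain ⟨x, hx, hx3⟩ := RHalf_exc_small hexc
      have := h4 x (hinf.sublist.subset hx)
      omega

private lemma avoid_transfer {μ : List ℕ} (_hpos : ∀ x ∈ μ, 0 < x) :
    (∀ r, 4 ≤ r → ∀ η ∈ ROrd r, ¬ η <:+: μ) ↔
      (∀ r, 5 ≤ r → ∀ η ∈ ROrd r, ¬ η <:+: μ.map (· + 1)) := by
  constructor
  · intro H r hr η hη hinf
    obtain ⟨r', rfl⟩ : ∃ r', r = r' + 1 := ⟨r - 1, by omega⟩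
    have h1 : η.map (· - 1) ∈ ROrd r' := mem_ROrd_pred hη
    have h2 : η.map (· - 1) <:+: (μ.map (· + 1)).map (· - 1) := infix_map _ hinf
    have h3 : (μ.map (· + 1)).map (· - 1) = μ := by
      rw [List.map_map]
      conv_rhs => rw [← List.map_id μ]
      exact List.map_congr_left fun x _ => by simp
    rw [h3] at h2
    exact H r' (by omega) _ h1 h2
  · intro H r hr η hη hinf
    have h1 : η.map (· + 1) ∈ ROrd (r + 1) := mem_ROrd_succ hη
    exact H (r + 1) (by omega) _ h1 (infix_map _ hinf)

end Aux2
section Aux3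

private lemma entries_ge {c : ℕ} {ν ρ : List ℕ} (hs : (ν ++ ρ).Pairwise (· ≥ ·))
    (hb : ∃ b ∈ ρ, c ≤ b) (hρ : ∀ x ∈ ρ, c ≤ x) : ∀ x ∈ ν ++ ρ, c ≤ x := by
  intro x hx
  rcases List.mem_append.1 hx with hx | hx
  · obtain ⟨b, hbρ, hbc⟩ := hb
    have := (List.pairwise_append.1 hs).2.2 x hx b hbρ
    omega
  · exact hρ x hx

private lemma partition_of_prefix {ν ρ : List ℕ} (h : IsPartition (ν ++ ρ)) :
    IsPartition ν :=
  ⟨(List.pairwise_append.1 h.1).1, fun x hx => h.2 x (List.mem_append.2 (Or.inl hx))⟩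

private lemma PFourFour_ge {l : List ℕ} (h : l ∈ PFourFour) : ∀ x ∈ l, 4 ≤ x := by
  obtain ⟨hl, ν, hν, rfl⟩ := h
  exact entries_ge hl.1.1 ⟨4, by simp⟩ (by intro x hx; simp at hx; omega)

private lemma PFiveFour_ge {l : List ℕ} (h : l ∈ PFiveFour) : ∀ x ∈ l, 4 ≤ x := by
  obtain ⟨hl, ν, hν, rfl⟩ := h
  exact entries_ge hl.1.1 ⟨4, by simp⟩ (by intro x hx; simp at hx; omega)

private lemma PgtFiveFour_ge {l : List ℕ} (h : l ∈ PgtFiveFour) : ∀ x ∈ l, 4 ≤ x := by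
  obtain ⟨hl, ν, hν, hν5, rfl⟩ := h
  exact entries_ge hl.1.1 ⟨4, by simp⟩ (by intro x hx; simp at hx; omega)

private lemma PFourFour_rev {l : List ℕ} (h : l ∈ PFourFour) :
    ∃ s, l.reverse = 4 :: 4 :: s := by
  obtain ⟨hl, ν, hν, rfl⟩ := h
  exact ⟨ν.reverse, by simp⟩

private lemma PFiveFour_rev {l : List ℕ} (h : l ∈ PFiveFour) :
    ∃ s, l.reverse = 4 :: 5 :: s := by
  obtain ⟨hl, ν, hν, rfl⟩ := h
  exact ⟨ν.reverse, by simp⟩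

private lemma PgtFiveFour_rev {l : List ℕ} (h : l ∈ PgtFiveFour) :
    ∃ s, l.reverse = 4 :: s ∧ ∀ x ∈ s, 5 < x := by
  obtain ⟨hl, ν, hν, hν5, rfl⟩ := h
  exact ⟨ν.reverse, by simp, fun x hx => hν5 x (by simpa using hx)⟩

/-- Decomposition of a partition in `PHalf` with entries `≥ 4` into the four classes. -/
private lemma decomp {μ : List ℕ} (hμ : μ ∈ PHalf) (h4 : ∀ x ∈ μ, 4 ≤ x) :
    μ ∈ PFourFour ∨ μ ∈ PFiveFour ∨ μ ∈ PgtFiveFour ∨ μ ∈ PgtFour := by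
  have hp : IsPartition μ := hμ.1
  rcases hrev : μ.reverse with _ | ⟨a, t⟩
  · have : μ = [] := by simpa using congrArg List.reverse hrev
    subst this
    exact Or.inr (Or.inr (Or.inr ⟨hμ, by simp⟩))
  · have hmemrev : ∀ x ∈ μ, x ∈ a :: t := by
      intro x hx; rw [← hrev]; exact List.mem_reverse.2 hx
    have hamem : a ∈ μ := by
      rw [← List.mem_reverse, hrev]; simp
    have hsrev : (a :: t).Pairwise (· ≤ ·) := by
      rw [← hrev]
      exact List.pairwise_reverse.2 (hp.1.imp fun h => h)
    have hmin : ∀ x ∈ t, a ≤ x := fun x hx => (List.pairwise_cons.1 hsrev).1 x hx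
    by_cases ha : a = 4
    · subst ha
      rcases t with _ | ⟨b, t'⟩
      · have hμeq : μ = [4] := by
          have := congrArg List.reverse hrev; simpa using this
        refine Or.inr (Or.inr (Or.inl ⟨hμ, [], ⟨by simp [IsPartition], by simp⟩,
          by simp, by simp [hμeq]⟩))
      · have hμeq : μ = t'.reverse ++ [b, 4] := by
          have := congrArg List.reverse hrev; simpa using this
        have hb4 : 4 ≤ b := h4 b (by rw [← List.mem_reverse, hrev]; simp)
        have hbt' : ∀ x ∈ t', b ≤ x :=
          fun x hx => (List.pairwise_cons.1 (List.pairwise_cons.1 hsrev).2).1 x hx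
        by_cases hb : b = 4
        · subst hb
          refine Or.inl ⟨hμ, t'.reverse, ?_, by simpa using hμeq⟩
          rw [hμeq] at hp
          exact partition_of_prefix (by simpa using hp)
        · by_cases hb5 : b = 5
          · subst hb5
            refine Or.inr (Or.inl ⟨hμ, t'.reverse, ?_, by simpa using hμeq⟩)
            rw [hμeq] at hp
            exact partition_of_prefix (by simpa using hp)
          · have hμeq2 : μ = (t'.reverse ++ [b]) ++ [4] := by simpa using hμeq
            refine Or.inr (Or.inr (Or.inl ⟨hμ, t'.reverse ++ [b], ?_, ?_, hμeq2⟩))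
            · rw [hμeq2] at hp
              exact partition_of_prefix hp
            · intro x hx
              rcases List.mem_append.1 hx with hx | hx
              · have := hbt' x (by simpa using hx); omega
              · simp at hx; omega
    · have ha5 : 5 ≤ a := by have := h4 a hamem; omega
      refine Or.inr (Or.inr (Or.inr ⟨hμ, fun x hx => ?_⟩))
      rcases List.mem_cons.1 (hmemrev x hx) with rfl | hx'
      · omega
      · have := hmin x hx'; omega

end Aux3
section Aux4

private lemma finite_partitions (n : ℕ) :
    {l : List ℕ | IsPartition l ∧ l.sum = n}.Finite := by
  apply Set.Finite.of_finite_image (f := fun l : List ℕ => (↑l : Multiset ℕ))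
  · apply Set.Finite.subset (Set.finite_range fun p : n.Partition => p.parts)
    rintro s ⟨l, ⟨⟨hs, hpos⟩, hsum⟩, rfl⟩
    exact ⟨⟨(↑l : Multiset ℕ), fun hi => hpos _ (by simpa using hi), by simpa using hsum⟩, rfl⟩
  · rintro l₁ ⟨⟨hs₁, _⟩, _⟩ l₂ ⟨⟨hs₂, _⟩, _⟩ hco
    exact List.Perm.eq_of_pairwise (fun a b _ _ h1 h2 => le_antisymm h2 h1) hs₁ hs₂ (Multiset.coe_eq_coe.mp hco)

private lemma finite_partsOf {X : Set (List ℕ)} (hX : ∀ l ∈ X, IsPartition l)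
    (n m : ℕ) : (partsOf X n m).Finite :=
  (finite_partitions n).subset fun l hl => ⟨hX l hl.1, hl.2.1⟩

private lemma map_mem_PgtFour_iff {μ : List ℕ} (hp : IsPartition μ)
    (h4 : ∀ x ∈ μ, 4 ≤ x) : μ.map (· + 1) ∈ PgtFour ↔ μ ∈ PHalf := by
  have hpos : ∀ x ∈ μ, 0 < x := fun x hx => by have := h4 x hx; omega
  have hp' : IsPartition (μ.map (· + 1)) := by
    refine ⟨sorted_map_add1.2 hp.1, ?_⟩
    intro x hx; simp at hx; obtain ⟨y, _, rfl⟩ := hx; omega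
  have h5 : ∀ x ∈ μ.map (· + 1), 5 ≤ x := by
    intro x hx; simp at hx; obtain ⟨y, hy, rfl⟩ := hx
    have := h4 y hy; omega
  constructor
  · intro hmem
    rw [mem_PHalf_iff (le_refl 4) hp h4]
    exact (avoid_transfer hpos).2
      ((mem_PHalf_iff (by norm_num) hp' h5).1 hmem.1)
  · intro hmem
    refine ⟨(mem_PHalf_iff (by norm_num) hp' h5).2
      ((avoid_transfer hpos).1 ((mem_PHalf_iff (le_refl 4) hp h4).1 hmem)), ?_⟩
    intro x hx; have := h5 x hx; omega

private lemma U_props {n' m : ℕ} {μ : List ℕ}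
    (hμ : μ ∈ partsOf PFourFour n' (2 * m) ∪ (partsOf PFiveFour n' (2 * m) ∪
      (partsOf PgtFiveFour n' (2 * m) ∪ partsOf PgtFour n' (2 * m)))) :
    μ ∈ PHalf ∧ (∀ x ∈ μ, 4 ≤ x) ∧ μ.sum = n' ∧ plen μ = 2 * m := by
  rcases hμ with ⟨h1, h2, h3⟩ | ⟨h1, h2, h3⟩ | ⟨h1, h2, h3⟩ | ⟨h1, h2, h3⟩
  · exact ⟨h1.1, PFourFour_ge h1, h2, h3⟩
  · exact ⟨h1.1, PFiveFour_ge h1, h2, h3⟩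
  · exact ⟨h1.1, PgtFiveFour_ge h1, h2, h3⟩
  · exact ⟨h1.1, fun x hx => by have := h1.2 x hx; omega, h2, h3⟩

end Aux4
/-- The counting recurrence
`|P_{>4}(n,2m)| = |P_{4,4}(n−m,2m)| + |P_{5,4}(n−m,2m)| + |P_{>5,4}(n−m,2m)| + |P_{>4}(n−m,2m)|`. -/
theorem card_PgtFour_recurrence (m n : ℕ) (h : m ≤ n) :
    (partsOf PgtFour n (2 * m)).ncard =
      (partsOf PFourFour (n - m) (2 * m)).ncard +
        (partsOf PFiveFour (n - m) (2 * m)).ncard +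
        (partsOf PgtFiveFour (n - m) (2 * m)).ncard +
        (partsOf PgtFour (n - m) (2 * m)).ncard := by
  set A := partsOf PFourFour (n - m) (2 * m) with hAdef
  set B := partsOf PFiveFour (n - m) (2 * m) with hBdef
  set C := partsOf PgtFiveFour (n - m) (2 * m) with hCdef
  set D := partsOf PgtFour (n - m) (2 * m) with hDdef
  have hAfin : A.Finite := finite_partsOf (fun l hl => hl.1.1) _ _
  have hBfin : B.Finite := finite_partsOf (fun l hl => hl.1.1) _ _
  have hCfin : C.Finite := finite_partsOf (fun l hl => hl.1.1) _ _
  have hDfin : D.Finite := finite_partsOf (fun l hl => hl.1.1) _ _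
  have key : partsOf PgtFour n (2 * m) =
      (List.map (· + 1)) '' (A ∪ (B ∪ (C ∪ D))) := by
    ext l
    constructor
    · rintro ⟨⟨hPH, hgt⟩, hsum, hplen⟩
      have hpart := hPH.1
      have hl5 : ∀ x ∈ l, 5 ≤ x := fun x hx => hgt x hx
      set μ := l.map (· - 1) with hμdef
      have hlμ : μ.map (· + 1) = l :=
        map_sub_add (fun x hx => by have := hl5 x hx; omega)
      have hμ4 : ∀ x ∈ μ, 4 ≤ x := by
        intro x hx; rw [hμdef] at hx; simp at hx
        obtain ⟨y, hy, rfl⟩ := hx; have := hl5 y hy; omega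
      have hμs : μ.Pairwise (· ≥ ·) := by
        rw [← sorted_map_add1, hlμ]; exact hpart.1
      have hμp : IsPartition μ := ⟨hμs, fun x hx => by have := hμ4 x hx; omega⟩
      have hlen : l.length = m := by
        have := plen_eq_two_mul (l := l) (fun x hx => by have := hl5 x hx; omega)
        omega
      have hμlen : μ.length = m := by rw [hμdef, List.length_map, hlen]
      have hμsum : μ.sum = n - m := by
        have h2 := sum_map_add1 μ
        rw [hlμ] at h2
        omega
      have hμplen : plen μ = 2 * m := by
        rw [plen_eq_two_mul (fun x hx => by have := hμ4 x hx; omega), hμlen]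
      have hμPH : μ ∈ PHalf := by
        rw [mem_PHalf_iff (le_refl 4) hμp hμ4]
        apply (avoid_transfer (fun x hx => by have := hμ4 x hx; omega)).2
        intro r hr η hη
        rw [hlμ]
        exact (mem_PHalf_iff (c := 5) (by norm_num) hpart hl5).1 hPH r hr η hη
      refine ⟨μ, ?_, hlμ⟩
      rcases decomp hμPH hμ4 with hc | hc | hc | hc
      · exact Or.inl ⟨hc, hμsum, hμplen⟩
      · exact Or.inr (Or.inl ⟨hc, hμsum, hμplen⟩)
      · exact Or.inr (Or.inr (Or.inl ⟨hc, hμsum, hμplen⟩))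
      · exact Or.inr (Or.inr (Or.inr ⟨hc, hμsum, hμplen⟩))
    · rintro ⟨μ, hμU, rfl⟩
      obtain ⟨hPH, h4, hsum, hplen⟩ := U_props hμU
      have hμlen : μ.length = m := by
        have := plen_eq_two_mul (l := μ) (fun x hx => by have := h4 x hx; omega)
        omega
      refine ⟨(map_mem_PgtFour_iff hPH.1 h4).2 hPH, ?_, ?_⟩
      · rw [sum_map_add1, hμlen, hsum]; omega
      · rw [plen_eq_two_mul ?_, List.length_map, hμlen]
        intro x hx; simp at hx
        obtain ⟨y, hy, rfl⟩ := hx; have := h4 y hy; omega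
  have hinj : Set.InjOn (List.map (· + 1)) (A ∪ (B ∪ (C ∪ D))) :=
    (List.map_injective_iff.2 (fun a b hab => by omega)).injOn
  have hfour : ∀ l ∈ C, (4 : ℕ) ∈ l := by
    intro l hl
    obtain ⟨s, hs, -⟩ := PgtFiveFour_rev hl.1
    rw [← List.mem_reverse, hs]; simp
  have hAB : Disjoint A B := by
    rw [Set.disjoint_left]
    intro l hlA hlB
    obtain ⟨s, hs⟩ := PFourFour_rev hlA.1
    obtain ⟨s', hs'⟩ := PFiveFour_rev hlB.1
    rw [hs] at hs'
    simp at hs'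
  have hAC : Disjoint A C := by
    rw [Set.disjoint_left]
    intro l hlA hlC
    obtain ⟨s, hs⟩ := PFourFour_rev hlA.1
    obtain ⟨s', hs', h5'⟩ := PgtFiveFour_rev hlC.1
    rw [hs] at hs'
    simp only [List.cons.injEq] at hs'
    have := h5' 4 (by rw [← hs'.2]; simp)
    omega
  have hBC : Disjoint B C := by
    rw [Set.disjoint_left]
    intro l hlB hlC
    obtain ⟨s, hs⟩ := PFiveFour_rev hlB.1
    obtain ⟨s', hs', h5'⟩ := PgtFiveFour_rev hlC.1
    rw [hs] at hs'
    simp only [List.cons.injEq] at hs'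
    have := h5' 5 (by rw [← hs'.2]; simp)
    omega
  have hD4 : ∀ l ∈ D, (4 : ℕ) ∉ l := by
    intro l hl hmem
    have := hl.1.2 4 hmem
    omega
  have hAD : Disjoint A D := by
    rw [Set.disjoint_left]
    intro l hlA hlD
    obtain ⟨s, hs⟩ := PFourFour_rev hlA.1
    exact hD4 l hlD (by rw [← List.mem_reverse, hs]; simp)
  have hBD : Disjoint B D := by
    rw [Set.disjoint_left]
    intro l hlB hlD
    obtain ⟨s, hs⟩ := PFiveFour_rev hlB.1
    exact hD4 l hlD (by rw [← List.mem_reverse, hs]; simp)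
  have hCD : Disjoint C D := by
    rw [Set.disjoint_left]
    intro l hlC hlD
    exact hD4 l hlD (hfour l hlC)
  rw [key, Set.ncard_image_of_injOn hinj,
    Set.ncard_union_eq (Set.disjoint_union_right.2
      ⟨hAB, Set.disjoint_union_right.2 ⟨hAC, hAD⟩⟩) hAfin
      ((hBfin.union (hCfin.union hDfin))),
    Set.ncard_union_eq (Set.disjoint_union_right.2 ⟨hBC, hBD⟩) hBfin
      (hCfin.union hDfin),
    Set.ncard_union_eq hCD hCfin hDfin]
  omega
end
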